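/- Let k ≥ 2 and let u : ℕ → A be a k-automatic infinite word over a finite alphabet A (i.e., the k-kernel of u is finite). If u contains only finitely many distinct palindromic factors, then the PPL-difference sequence d_u is k-automatic (its k-kernel is finite). -/

import Mathlib

/-- Prefix `u[0..n-1]` of the infinite word `u`. -/
def wordPrefix {A : Type*} (u : ℕ → A) (n : ℕ) : List A :=
  List.ofFn (fun i : Fin n => u i)

/-- Factor `u[i..i+ℓ-1]` of the infinite word `u`. -/
def wordFactor {A : Type*} (u : ℕ → A) (i ℓ : ℕ) : List A :=
  List.ofFn (fun j : Fin ℓ => u (i + j))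

/-- A palindrome is a word equal to its reversal. -/
def IsPalindrome {A : Type*} (w : List A) : Prop := w.reverse = w

/-- `w` is a concatenation of `k` nonempty palindromes. -/
def IsPalConcat {A : Type*} (w : List A) (k : ℕ) : Prop :=
  ∃ ps : List (List A), ps.length = k ∧ (∀ p ∈ ps, p ≠ [] ∧ IsPalindrome p) ∧ ps.flatten = w

/-- Prefix palindromic length: the least number of nonempty palindromes whose
concatenation is the prefix of length `n` of `u` (`PPL u 0 = 0`). -/
noncomputable def PPL {A : Type*} (u : ℕ → A) (n : ℕ) : ℕ :=
  sInf {k | IsPalConcat (wordPrefix u n) k}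

/-- The PPL-difference sequence `d_u(n) = PPL_u(n+1) - PPL_u(n)`. -/
noncomputable def PPLdiff {A : Type*} (u : ℕ → A) (n : ℕ) : ℤ :=
  (PPL u (n + 1) : ℤ) - (PPL u n : ℤ)

/-- The `k`-kernel of a sequence `x`: all subsequences `(x (k^e * n + b))_n` with `b < k^e`. -/
def kernelSeq {S : Type*} (k : ℕ) (x : ℕ → S) : Set (ℕ → S) :=
  {y | ∃ e b : ℕ, b < k ^ e ∧ y = fun n => x (k ^ e * n + b)}

/-!
If every palindromic factor of `u` has length at most `L`, then `PPL u (m + 1)` is one more than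
the least `PPL u (m + 1 - ℓ)` over the palindromic suffixes of length `ℓ ≤ L` of the prefix, and
`PPL` changes by at most `L` per letter. So the last `L` letters, together with the last `L`
values of `PPL` relative to the current one, form a state ranging over a finite set; it is updated
by reading the next letter, and `PPLdiff` is read off from it and that letter. The difference
sequence is thus the output of a finite automaton reading `u`, and such outputs are `k`-automatic:
the `(k, b)`-decimation of a run is a run of the automaton that reads blocks of `k` letters,
taken on the vector of all kernel sequences of `u`.
-/

section Kernel

variable {S T : Type*} {k : ℕ}

theorem kernelSeq_subset_of_closed {x : ℕ → S} {Y : Set (ℕ → S)} (hx : x ∈ Y)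
    (hY : ∀ y ∈ Y, ∀ b < k, (fun n => y (k * n + b)) ∈ Y) : kernelSeq k x ⊆ Y := by
  rintro _ ⟨e, b, hb, rfl⟩
  induction e generalizing b with
  | zero => simpa [Nat.lt_one_iff.mp hb] using hx
  | succ e ih =>
    rw [pow_succ'] at hb
    have hke : 0 < k ^ e := Nat.pos_of_ne_zero (by rintro h; simp [h] at hb)
    have hq : b / k ^ e < k := (Nat.div_lt_iff_lt_mul hke).mpr hb
    convert hY _ (ih (b % k ^ e) (Nat.mod_lt b hke)) _ hq using 2 with n
    rw [mul_add, ← mul_assoc, ← pow_succ, add_assoc, Nat.div_add_mod]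

theorem mem_kernelSeq_decimate {x y : ℕ → S} (hy : y ∈ kernelSeq k x)
    {b : ℕ} (hb : b < k) : (fun n => y (k * n + b)) ∈ kernelSeq k x := by
  obtain ⟨e, c, hc, rfl⟩ := hy
  refine ⟨e + 1, k ^ e * b + c, ?_, funext fun n => ?_⟩
  · calc k ^ e * b + c < k ^ e * (b + 1) := by rw [mul_add_one]; omega
      _ ≤ k ^ (e + 1) := by rw [pow_succ]; exact Nat.mul_le_mul_left _ hb
  · simp only [pow_succ]
    ring_nf

theorem self_mem_kernelSeq (k : ℕ) (x : ℕ → S) : x ∈ kernelSeq k x :=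
  ⟨0, 0, Nat.one_pos, by simp⟩

theorem kernelSeq_comp (f : S → T) (x : ℕ → S) :
    kernelSeq k (f ∘ x) = (f ∘ ·) '' kernelSeq k x := by
  ext y
  constructor
  · rintro ⟨e, b, hb, rfl⟩
    exact ⟨_, ⟨e, b, hb, rfl⟩, rfl⟩
  · rintro ⟨_, ⟨e, b, hb, rfl⟩, rfl⟩
    exact ⟨e, b, hb, rfl⟩

theorem Set.Finite.kernelSeq_comp {x : ℕ → S} (hx : (kernelSeq k x).Finite) (f : S → T) :
    (kernelSeq k (f ∘ x)).Finite :=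
  _root_.kernelSeq_comp f x ▸ hx.image _

end Kernel

def runSeq {Q V : Type*} (δ : Q → V → Q) (q₀ : Q) (x : ℕ → V) : ℕ → Q
  | 0 => q₀
  | n + 1 => δ (runSeq δ q₀ x n) (x n)

section Run

variable {Q V A : Type*} {k : ℕ} {X : ℕ → V} {σ : ℕ → V → V}

theorem runSeq_comp (δ : Q → A → Q) (q₀ : Q) (f : V → A) (x : ℕ → V) :
    runSeq δ q₀ (f ∘ x) = runSeq (fun q v => δ q (f v)) q₀ x := by
  funext n
  induction n with
  | zero => rfl
  | succ n ih => simp only [runSeq, ih, Function.comp_apply]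

theorem runSeq_mul_add (hX : ∀ n, ∀ b < k, X (k * n + b) = σ b (X n)) (δ : Q → V → Q) (q₀ : Q)
    (n : ℕ) {b : ℕ} (hb : b ≤ k) :
    runSeq δ q₀ X (k * n + b) = runSeq δ (runSeq δ q₀ X (k * n)) (fun i => σ i (X n)) b := by
  induction b with
  | zero => rfl
  | succ b ih => rw [← add_assoc, runSeq, ih (by omega), hX n b (by omega), runSeq]

theorem runSeq_mul (hX : ∀ n, ∀ b < k, X (k * n + b) = σ b (X n)) (δ : Q → V → Q) (q₀ : Q)
    (n : ℕ) :
    runSeq δ q₀ X (k * n) = runSeq (fun q v => runSeq δ q (fun i => σ i v) k) q₀ X n := by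
  induction n with
  | zero => rfl
  | succ n ih => rw [mul_add_one, runSeq_mul_add hX δ q₀ n le_rfl, ih, runSeq]

theorem kernelSeq_runSeq_finite_of_selfSimilar [Finite Q] [Finite V]
    (hX : ∀ n, ∀ b < k, X (k * n + b) = σ b (X n)) (δ : Q → V → Q) (q₀ : Q) :
    (kernelSeq k fun n => (runSeq δ q₀ X n, X n)).Finite := by
  -- A decimated run is a run of the automaton reading blocks of `k` letters, plus an output map.
  let out : (Q → V → Q) × (Q → V → Q × V) → ℕ → Q × V := fun p n =>
    p.2 (runSeq p.1 q₀ X n) (X n)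
  refine (Set.finite_range out).subset (kernelSeq_subset_of_closed ⟨(δ, Prod.mk), rfl⟩ ?_)
  rintro _ ⟨⟨δ', g⟩, rfl⟩ b hb
  refine ⟨(fun q v => runSeq δ' q (fun i => σ i v) k,
    fun q v => g (runSeq δ' q (fun i => σ i v) b) (σ b v)), funext fun n => ?_⟩
  simp only [out, runSeq_mul_add hX δ' q₀ n hb.le, runSeq_mul hX, hX n b hb]

end Run

section Word

variable {A Q O : Type*} {k : ℕ} {u : ℕ → A}

theorem kernelSeq_runSeq_finite [Finite A] [Finite Q] (hu : (kernelSeq k u).Finite)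
    (δ : Q → A → Q) (q₀ : Q) : (kernelSeq k fun n => (runSeq δ q₀ u n, u n)).Finite := by
  have := hu.to_subtype
  -- The vector of all kernel sequences at `n` is `k`-self-similar; `u` is one of its coordinates.
  let X : ℕ → kernelSeq k u → A := fun n y => y.1 n
  let σ : ℕ → (kernelSeq k u → A) → kernelSeq k u → A := fun b β y =>
    if hb : b < k then β ⟨_, mem_kernelSeq_decimate y.2 hb⟩ else β y
  have hX : ∀ n, ∀ b < k, X (k * n + b) = σ b (X n) := fun n b hb => by
    funext y
    simp [X, σ, hb]
  let u₀ : kernelSeq k u := ⟨u, self_mem_kernelSeq k u⟩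
  have hu₀ : u = (· u₀) ∘ X := rfl
  have key := (kernelSeq_runSeq_finite_of_selfSimilar hX (fun q β => δ q (β u₀)) q₀).kernelSeq_comp
    (Prod.map id (· u₀))
  rwa [hu₀, runSeq_comp]

theorem exists_runSeq_eq {s : ℕ → Q}
    (hs : (fun m => s (m + 1)).FactorsThrough fun m => (s m, u m)) :
    ∃ δ : Q → A → Q, runSeq δ (s 0) u = s := by
  refine ⟨fun q a => Function.extend (fun m => (s m, u m)) (fun m => s (m + 1)) (fun _ => s 0)
    (q, a), funext fun n => ?_⟩
  induction n with
  | zero => rfl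
  | succ n ih => rw [runSeq, ih, hs.extend_apply]

theorem kernelSeq_finite_of_factorsThrough [Finite A] (hu : (kernelSeq k u).Finite) {s : ℕ → Q}
    (hs : (Set.range s).Finite) (hstep : (fun m => s (m + 1)).FactorsThrough fun m => (s m, u m))
    {x : ℕ → O} (hx : x.FactorsThrough fun m => (s m, u m)) : (kernelSeq k x).Finite := by
  have := hs.to_subtype
  let r := Set.rangeFactorization s
  have hrstep : (fun m => r (m + 1)).FactorsThrough fun m => (r m, u m) := fun m m' h =>
    Subtype.ext <| hstep <| congrArg (Prod.map Subtype.val id) h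
  obtain ⟨δ, hδ⟩ := exists_runSeq_eq hrstep
  have hx' : x = (fun p => Function.extend (fun m => (s m, u m)) x (fun _ => x 0) (p.1.1, p.2)) ∘
      fun n => (runSeq δ (r 0) u n, u n) := by
    funext n
    simp only [Function.comp_apply, hδ, r, Set.rangeFactorization_coe, hx.extend_apply]
  rw [hx']
  exact (kernelSeq_runSeq_finite hu δ (r 0)).kernelSeq_comp _

end Word

section PrefixPalindromicLength

variable {A : Type*} {u : ℕ → A}

@[simp]
theorem length_wordPrefix (u : ℕ → A) (n : ℕ) : (wordPrefix u n).length = n :=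
  List.length_ofFn

@[simp]
theorem length_wordFactor (u : ℕ → A) (i ℓ : ℕ) : (wordFactor u i ℓ).length = ℓ :=
  List.length_ofFn

theorem wordPrefix_add (u : ℕ → A) (n j : ℕ) :
    wordPrefix u (n + j) = wordPrefix u n ++ wordFactor u n j := by
  unfold wordPrefix wordFactor
  rw [List.ofFn_add]
  rfl

theorem isPalConcat_length (w : List A) : IsPalConcat w w.length := by
  refine ⟨w.map ([·]), List.length_map _, fun p hp => ?_, List.flatMap_singleton' w⟩
  obtain ⟨a, -, rfl⟩ := List.mem_map.mp hp
  exact ⟨List.cons_ne_nil _ _, rfl⟩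

theorem IsPalConcat.append {w v : List A} {a b : ℕ} (hw : IsPalConcat w a)
    (hv : IsPalConcat v b) : IsPalConcat (w ++ v) (a + b) := by
  obtain ⟨ps, rfl, hps, rfl⟩ := hw
  obtain ⟨qs, rfl, hqs, rfl⟩ := hv
  refine ⟨ps ++ qs, List.length_append, fun p hp => ?_, List.flatten_append⟩
  exact (List.mem_append.mp hp).elim (hps p) (hqs p)

theorem isPalConcat_PPL (u : ℕ → A) (n : ℕ) : IsPalConcat (wordPrefix u n) (PPL u n) :=
  Nat.sInf_mem (s := {k | IsPalConcat (wordPrefix u n) k})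
    ⟨n, by simpa using isPalConcat_length (wordPrefix u n)⟩

theorem PPL_le {n m : ℕ} (h : IsPalConcat (wordPrefix u n) m) : PPL u n ≤ m :=
  Nat.sInf_le h

theorem PPL_add_le (u : ℕ → A) (n j : ℕ) : PPL u (n + j) ≤ PPL u n + j := by
  apply PPL_le
  rw [wordPrefix_add]
  simpa using (isPalConcat_PPL u n).append (isPalConcat_length (wordFactor u n j))

theorem PPL_add_le_succ {m ℓ : ℕ} (hℓ : 0 < ℓ) (hp : IsPalindrome (wordFactor u m ℓ)) :
    PPL u (m + ℓ) ≤ PPL u m + 1 := by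
  apply PPL_le
  rw [wordPrefix_add]
  refine (isPalConcat_PPL u m).append ⟨[wordFactor u m ℓ], rfl, ?_, List.flatten_singleton⟩
  simpa [← List.length_eq_zero_iff] using ⟨hℓ.ne', hp⟩

/-- The last palindrome of an optimal factorization of a nonempty prefix. -/
theorem exists_PPL_eq_succ {n : ℕ} (hn : 0 < n) :
    ∃ m ℓ, m + ℓ = n ∧ 0 < ℓ ∧ IsPalindrome (wordFactor u m ℓ) ∧ PPL u n = PPL u m + 1 := by
  obtain ⟨ps, hlen, hps, hflat⟩ := isPalConcat_PPL u n
  obtain ⟨qs, p, rfl⟩ : ∃ (qs : List (List A)) (p : List A), ps = qs.concat p := by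
    refine (List.eq_nil_or_concat ps).resolve_left ?_
    rintro rfl
    exact hn.ne (by simpa using congrArg List.length hflat)
  rw [List.concat_eq_append, List.flatten_append, List.flatten_singleton] at hflat
  obtain ⟨hp, hpal⟩ := hps p (by simp)
  have hsum : qs.flatten.length + p.length = n := by
    simpa using congrArg List.length hflat
  rw [← hsum, wordPrefix_add] at hflat
  obtain ⟨hqs, hpw⟩ := List.append_inj' hflat (length_wordFactor _ _ _).symm
  rw [hpw] at hpal
  refine ⟨_, _, hsum, List.length_pos_iff.mpr hp, hpal, le_antisymm ?_ ?_⟩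
  · rw [← hsum]
    exact PPL_add_le_succ (List.length_pos_iff.mpr hp) hpal
  · rw [← hlen, List.length_concat, Nat.add_le_add_iff_right]
    exact PPL_le ⟨qs, rfl, fun q hq => hps q (by simp [hq]), hqs⟩

end PrefixPalindromicLength

section Profile

variable {A : Type*} {u : ℕ → A} {L : ℕ}

theorem PPL_le_PPL_sub_add (u : ℕ → A) {n t : ℕ} (ht : t ≤ n) : PPL u n ≤ PPL u (n - t) + t := by
  simpa [Nat.sub_add_cancel ht] using PPL_add_le u (n - t) t

theorem PPL_sub_le (hL : ∀ i ℓ, IsPalindrome (wordFactor u i ℓ) → ℓ ≤ L) {n t : ℕ}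
    (ht : t ≤ n) : PPL u (n - t) ≤ PPL u n + t * L := by
  induction t with
  | zero => simp
  | succ t ih =>
    obtain ⟨m, ℓ, hmℓ, hℓ, hpal, hPPL⟩ := exists_PPL_eq_succ (u := u) (n := n - t) (by omega)
    have hℓL := hL m ℓ hpal
    have hstep := PPL_add_le u m (ℓ - 1)
    rw [show m + (ℓ - 1) = n - (t + 1) by omega] at hstep
    have := ih (by omega)
    rw [add_one_mul]
    omega

noncomputable def pplProfile (u : ℕ → A) (L m : ℕ) : Fin L → Option (A × ℤ) := fun j =>
  if (j : ℕ) < m then some (u (m - (j + 1)), (PPL u (m - (j + 1)) : ℤ) - PPL u m) else none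

theorem finite_range_pplProfile [Finite A] (hL : ∀ i ℓ, IsPalindrome (wordFactor u i ℓ) → ℓ ≤ L) :
    (Set.range (pplProfile u L)).Finite := by
  let T : Set (Option (A × ℤ)) := insert none (some '' (Set.univ ×ˢ Set.Icc (-(L : ℤ)) (L * L)))
  have hT : T.Finite := ((Set.finite_univ.prod (Set.finite_Icc _ _)).image _).insert _
  refine (Set.Finite.pi fun _ => hT).subset ?_
  rintro _ ⟨m, rfl⟩ j -
  simp only [pplProfile]
  split_ifs with hj
  · have hlow := PPL_le_PPL_sub_add u (show (j : ℕ) + 1 ≤ m by omega)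
    have hup := PPL_sub_le hL (show (j : ℕ) + 1 ≤ m by omega)
    have hmul : ((j : ℕ) + 1) * L ≤ L * L := Nat.mul_le_mul_right L j.isLt
    exact Set.mem_insert_of_mem _ ⟨_, ⟨trivial, by omega, by omega⟩, rfl⟩
  · exact Set.mem_insert _ _

theorem lookback_eq_of_pplProfile_eq {m m' : ℕ} (h : pplProfile u L m = pplProfile u L m')
    (hu : u m = u m') {t : ℕ} (htL : t ≤ L) (htm : t ≤ m) :
    t ≤ m' ∧ u (m - t) = u (m' - t) ∧
      (PPL u (m - t) : ℤ) - PPL u m = PPL u (m' - t) - PPL u m' := by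
  rcases t with _ | j
  · simpa using hu
  · have hj := congrFun h ⟨j, htL⟩
    simp only [pplProfile, if_pos (show j < m by omega)] at hj
    split_ifs at hj with hj'
    · simp only [Option.some.injEq, Prod.mk.injEq] at hj
      exact ⟨hj', hj⟩

theorem wordFactor_eq_of_pplProfile_eq {m m' : ℕ} (h : pplProfile u L m = pplProfile u L m')
    (hu : u m = u m') {ℓ : ℕ} (hℓL : ℓ ≤ L + 1) (hℓm : ℓ ≤ m + 1) :
    ℓ ≤ m' + 1 ∧ wordFactor u (m + 1 - ℓ) ℓ = wordFactor u (m' + 1 - ℓ) ℓ := by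
  rcases Nat.eq_zero_or_pos ℓ with rfl | hℓ
  · exact ⟨Nat.zero_le _, rfl⟩
  have hℓm' := (lookback_eq_of_pplProfile_eq h hu (t := ℓ - 1) (by omega) (by omega)).1
  refine ⟨by omega, List.ofFn_inj.mpr (funext fun j => ?_)⟩
  have hj := (lookback_eq_of_pplProfile_eq h hu (t := ℓ - 1 - j) (by omega) (by omega)).2.1
  convert hj using 2 <;> omega

theorem PPLdiff_le_of_pplProfile_eq (hL : ∀ i ℓ, IsPalindrome (wordFactor u i ℓ) → ℓ ≤ L)
    {m m' : ℕ} (h : pplProfile u L m = pplProfile u L m') (hu : u m = u m') :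
    PPLdiff u m ≤ PPLdiff u m' := by
  obtain ⟨i, ℓ, hiℓ, hℓ, hpal, hPPL⟩ := exists_PPL_eq_succ (u := u) (n := m' + 1) m'.succ_pos
  have hℓL := hL i ℓ hpal
  obtain ⟨hℓm, hw⟩ := wordFactor_eq_of_pplProfile_eq h.symm hu.symm (ℓ := ℓ) (by omega) (by omega)
  have hdiff := (lookback_eq_of_pplProfile_eq h hu (t := ℓ - 1) (by omega) (by omega)).2.2
  have hle := PPL_add_le_succ (u := u) (m := m + 1 - ℓ) hℓ
    (by rwa [← hw, show m' + 1 - ℓ = i by omega])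
  rw [Nat.sub_add_cancel hℓm] at hle
  rw [show m - (ℓ - 1) = m + 1 - ℓ by omega, show m' - (ℓ - 1) = i by omega] at hdiff
  unfold PPLdiff
  omega

theorem PPLdiff_eq_of_pplProfile_eq (hL : ∀ i ℓ, IsPalindrome (wordFactor u i ℓ) → ℓ ≤ L)
    {m m' : ℕ} (h : pplProfile u L m = pplProfile u L m') (hu : u m = u m') :
    PPLdiff u m = PPLdiff u m' :=
  (PPLdiff_le_of_pplProfile_eq hL h hu).antisymm (PPLdiff_le_of_pplProfile_eq hL h.symm hu.symm)

theorem pplProfile_succ_eq (hL : ∀ i ℓ, IsPalindrome (wordFactor u i ℓ) → ℓ ≤ L)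
    {m m' : ℕ} (h : pplProfile u L m = pplProfile u L m') (hu : u m = u m') :
    pplProfile u L (m + 1) = pplProfile u L (m' + 1) := by
  have hd := PPLdiff_eq_of_pplProfile_eq hL h hu
  funext j
  by_cases hj : (j : ℕ) ≤ m
  · obtain ⟨hj', hlet, hdiff⟩ := lookback_eq_of_pplProfile_eq h hu j.isLt.le hj
    simp only [pplProfile, if_pos (show (j : ℕ) < m + 1 by omega),
      if_pos (show (j : ℕ) < m' + 1 by omega), Nat.add_sub_add_right, hlet]
    unfold PPLdiff at hd
    congr 2
    omega
  · have hj' : ¬ (j : ℕ) ≤ m' := fun hj' =>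
      hj (lookback_eq_of_pplProfile_eq h.symm hu.symm j.isLt.le hj').1
    simp only [pplProfile, if_neg (show ¬ (j : ℕ) < m + 1 by omega),
      if_neg (show ¬ (j : ℕ) < m' + 1 by omega)]

end Profile

theorem diff_automatic_of_finitely_many_palindromes {A : Type*} [Finite A]
    (u : ℕ → A) (k : ℕ)
    (hu : (kernelSeq k u).Finite)
    (hpal : {w : List A | w ≠ [] ∧ IsPalindrome w ∧ ∃ i : ℕ, w = wordFactor u i w.length}.Finite) :
    (kernelSeq k (PPLdiff u)).Finite := by
  obtain ⟨L, hL⟩ := (hpal.image List.length).bddAbove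
  have hbound : ∀ i ℓ, IsPalindrome (wordFactor u i ℓ) → ℓ ≤ L := by
    intro i ℓ hp
    rcases Nat.eq_zero_or_pos ℓ with rfl | hℓ
    · exact Nat.zero_le L
    have hne : wordFactor u i ℓ ≠ [] := by simpa [← List.length_eq_zero_iff] using hℓ.ne'
    simpa using hL ⟨wordFactor u i ℓ, ⟨hne, hp, i, by simp⟩, rfl⟩
  exact kernelSeq_finite_of_factorsThrough hu (finite_range_pplProfile hbound)
    (fun _ _ h => pplProfile_succ_eq hbound (congrArg Prod.fst h) (congrArg Prod.snd h))
    (fun _ _ h => PPLdiff_eq_of_pplProfile_eq hbound (congrArg Prod.fst h) (congrArg Prod.snd h))
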